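/- Let G be a group with elements g₁,…,g₅ and integers t_{ijk} (1 ≤ i < j < k ≤ 5) satisfying the listed commutator relations. Then for every integer y, the conjugate g₁^{-y} g₃ g₁^{y} equals g₃ · g₄^{y t₁₃₄} · g₅^{y t₁₃₅ + s₂(y) t₁₃₄ t₁₄₅}. -/

import Mathlib

/-- `s₂(x) = x(x-1)/2` -/
def s2 (x : ℤ) : ℤ := x * (x - 1) / 2

/-!
Conjugation by `g₁` is an automorphism fixing `g₅` and sending `g₄ ↦ g₄ g₅^{t₁₄₅}` and
`g₃ ↦ g₃ g₄^{t₁₃₄} g₅^{t₁₃₅}`. As `g₅` commutes with `g₄`, it maps the right-hand side at `y` to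
the right-hand side at `y + 1` (the cross terms accumulate via `s₂(y + 1) = s₂(y) + y`), and an
integer-indexed sequence obeying this recursion is determined by its value at `0`, which is `g₃`.
-/

lemma two_mul_s2 (y : ℤ) : 2 * s2 y = y * (y - 1) :=
  Int.mul_ediv_cancel' (Int.even_mul_pred_self y).two_dvd

lemma s2_add_one (y : ℤ) : s2 (y + 1) = s2 y + y := by
  have h := two_mul_s2 (y + 1)
  have h' := two_mul_s2 y
  linarith

section Conjugation

variable {G : Type*} [Group G]

lemma commute_of_inv_mul_inv_mul_mul_eq_one {a b : G} (h : a⁻¹ * b⁻¹ * a * b = 1) :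
    Commute a b :=
  Commute.inv_inv_iff.mp <| commutatorElement_eq_one_iff_commute.mp <| by
    rwa [commutatorElement_def, inv_inv, inv_inv]

lemma inv_mul_mul_eq_mul_of_inv_mul_inv_mul_mul_eq {a b c : G} (h : a⁻¹ * b⁻¹ * a * b = c) :
    b⁻¹ * a * b = a * c := by
  rw [← h]
  group

lemma inv_mul_zpow_mul {g u : G} (n : ℤ) : g⁻¹ * u ^ n * g = (g⁻¹ * u * g) ^ n := by
  simpa using (conj_zpow (a := g⁻¹) (b := u) (i := n)).symm

lemma eq_zpow_conj_of_succ {g : G} {f : ℤ → G} (hf : ∀ y, f (y + 1) = g⁻¹ * f y * g) (y : ℤ) :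
    f y = g ^ (-y) * f 0 * g ^ y := by
  induction y using Int.induction_on with
  | zero => simp
  | succ n ih =>
    rw [hf, ih]
    group
  | pred n ih =>
    have hpred : f (-n - 1) = g * f (-n) * g⁻¹ := by
      rw [show -(n : ℤ) = -n - 1 + 1 by ring, hf]
      group
    rw [hpred, ih]
    group

lemma inv_mul_zpow_mul_of_inv_mul_mul_eq {g u z : G} {c : ℤ} (hu : g⁻¹ * u * g = u * z ^ c)
    (hzu : Commute z u) (n : ℤ) : g⁻¹ * u ^ n * g = u ^ n * z ^ (n * c) := by
  rw [inv_mul_zpow_mul, hu, (hzu.zpow_left c).symm.mul_zpow, ← zpow_mul, mul_comm c]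

lemma inv_mul_mul_eq_succ_of_conj {g x u z : G} {a b c : ℤ} (hx : g⁻¹ * x * g = x * (u ^ a * z ^ b))
    (hu : g⁻¹ * u * g = u * z ^ c) (hzg : Commute z g) (hzu : Commute z u) (y : ℤ) :
    g⁻¹ * (x * u ^ (y * a) * z ^ (y * b + s2 y * a * c)) * g
      = x * u ^ ((y + 1) * a) * z ^ ((y + 1) * b + s2 (y + 1) * a * c) := by
  have hz (n : ℤ) : g⁻¹ * z ^ n * g = z ^ n := by
    rw [inv_mul_zpow_mul, mul_assoc, hzg.eq, inv_mul_cancel_left]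
  calc g⁻¹ * (x * u ^ (y * a) * z ^ (y * b + s2 y * a * c)) * g
      = (g⁻¹ * x * g) * (g⁻¹ * u ^ (y * a) * g) * (g⁻¹ * z ^ (y * b + s2 y * a * c) * g) := by
        group
    _ = x * u ^ a * (z ^ b * u ^ (y * a)) * z ^ (y * a * c + y * b + s2 y * a * c) := by
        rw [hx, inv_mul_zpow_mul_of_inv_mul_mul_eq hu hzu, hz]
        group
    _ = x * u ^ ((y + 1) * a) * z ^ ((y + 1) * b + s2 (y + 1) * a * c) := by
        rw [(hzu.zpow_zpow b (y * a)).eq, s2_add_one]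
        group

end Conjugation

theorem g3_conjugate_by_g1_power_general (G : Type*) [Group G] (g1 g3 g4 g5 : G)
    (t134 t135 t145 : ℤ)
    (h31 : g3⁻¹ * g1⁻¹ * g3 * g1 = g4 ^ t134 * g5 ^ t135)
    (h41 : g4⁻¹ * g1⁻¹ * g4 * g1 = g5 ^ t145)
    (h51 : g5⁻¹ * g1⁻¹ * g5 * g1 = 1)
    (h54 : g5⁻¹ * g4⁻¹ * g5 * g4 = 1) :
    ∀ y : ℤ,
      g1 ^ (-y) * g3 * g1 ^ y
        = g3 * g4 ^ (y * t134) * g5 ^ (y * t135 + s2 y * t134 * t145) := by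
  have c51 := commute_of_inv_mul_inv_mul_mul_eq_one h51
  have c54 := commute_of_inv_mul_inv_mul_mul_eq_one h54
  have k31 := inv_mul_mul_eq_mul_of_inv_mul_inv_mul_mul_eq h31
  have k41 := inv_mul_mul_eq_mul_of_inv_mul_inv_mul_mul_eq h41
  intro y
  have hy := eq_zpow_conj_of_succ
    (f := fun y => g3 * g4 ^ (y * t134) * g5 ^ (y * t135 + s2 y * t134 * t145))
    (fun y => (inv_mul_mul_eq_succ_of_conj k31 k41 c51 c54 y).symm) y
  simpa [s2] using hy.symm

/-- Conjugation formula `g₃^{g₁^y} = g₃ g₄^{y t₁₃₄} g₅^{y t₁₃₅ + s₂(y) t₁₃₄ t₁₄₅}`. -/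
theorem g3_conjugate_by_g1_power (G : Type*) [Group G] (g1 g2 g3 g4 g5 : G)
    (t123 t124 t125 t134 t135 t145 t234 t235 t245 t345 : ℤ)
    (h21 : g2⁻¹ * g1⁻¹ * g2 * g1 = g3 ^ t123 * g4 ^ t124 * g5 ^ t125)
    (h31 : g3⁻¹ * g1⁻¹ * g3 * g1 = g4 ^ t134 * g5 ^ t135)
    (h32 : g3⁻¹ * g2⁻¹ * g3 * g2 = g4 ^ t234 * g5 ^ t235)
    (h41 : g4⁻¹ * g1⁻¹ * g4 * g1 = g5 ^ t145)
    (h42 : g4⁻¹ * g2⁻¹ * g4 * g2 = g5 ^ t245)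
    (h43 : g4⁻¹ * g3⁻¹ * g4 * g3 = g5 ^ t345)
    (h51 : g5⁻¹ * g1⁻¹ * g5 * g1 = 1)
    (h52 : g5⁻¹ * g2⁻¹ * g5 * g2 = 1)
    (h53 : g5⁻¹ * g3⁻¹ * g5 * g3 = 1)
    (h54 : g5⁻¹ * g4⁻¹ * g5 * g4 = 1) :
    ∀ y : ℤ,
      g1 ^ (-y) * g3 * g1 ^ y
        = g3 * g4 ^ (y * t134) * g5 ^ (y * t135 + s2 y * t134 * t145) :=
  g3_conjugate_by_g1_power_general G g1 g3 g4 g5 t134 t135 t145 h31 h41 h51 h54
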